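/- arXiv:2603.10099 — 4 statements merged into one kernel-verified Lean document; each statement's English description precedes it below -/
import Mathlib

section
/- For real matrices A and B, the Moore–Penrose pseudoinverse of their Kronecker product satisfies (A ⊗ B)† = A† ⊗ B†. -/
open Matrix
open scoped Kronecker

/-- `Y` is the Moore–Penrose pseudoinverse of `X`. -/
def IsMoorePenrose {α β : Type*} [Fintype α] [Fintype β]
    (X : Matrix α β ℝ) (Y : Matrix β α ℝ) : Prop :=
  X * Y * X = X ∧ Y * X * Y = Y ∧ (X * Y)ᵀ = X * Y ∧ (Y * X)ᵀ = Y * X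

theorem Matrix.transpose_kronecker {R α β γ δ : Type*} [Mul R] (X : Matrix α β R)
    (Y : Matrix γ δ R) : (X ⊗ₖ Y)ᵀ = Xᵀ ⊗ₖ Yᵀ :=
  kroneckerMap_transpose _ X Y

theorem IsMoorePenrose.kronecker {α β γ δ : Type*} [Fintype α] [Fintype β] [Fintype γ]
    [Fintype δ] {A : Matrix α β ℝ} {Ad : Matrix β α ℝ} {B : Matrix γ δ ℝ} {Bd : Matrix δ γ ℝ}
    (hA : IsMoorePenrose A Ad) (hB : IsMoorePenrose B Bd) :
    IsMoorePenrose (A ⊗ₖ B) (Ad ⊗ₖ Bd) := by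
  obtain ⟨hAAdA, hAdAAd, hAAd, hAdA⟩ := hA
  obtain ⟨hBBdB, hBdBBd, hBBd, hBdB⟩ := hB
  refine ⟨?_, ?_, ?_, ?_⟩
  · rw [← mul_kronecker_mul, ← mul_kronecker_mul, hAAdA, hBBdB]
  · rw [← mul_kronecker_mul, ← mul_kronecker_mul, hAdAAd, hBdBBd]
  · rw [← mul_kronecker_mul, transpose_kronecker, hAAd, hBBd]
  · rw [← mul_kronecker_mul, transpose_kronecker, hAdA, hBdB]

theorem stmt_5 (m1 n1 m2 n2 : ℕ)
    (A : Matrix (Fin m1) (Fin n1) ℝ) (B : Matrix (Fin m2) (Fin n2) ℝ)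
    (Ad : Matrix (Fin n1) (Fin m1) ℝ) (Bd : Matrix (Fin n2) (Fin m2) ℝ)
    (hA : IsMoorePenrose A Ad) (hB : IsMoorePenrose B Bd) :
    IsMoorePenrose (A ⊗ₖ B) (Ad ⊗ₖ Bd) :=
  hA.kronecker hB
end

section
/- (Covariance of combined estimators) Let Ω1, Ω2 be n×n symmetric positive semidefinite matrices, A = Ω2(Ω1 + Ω2)† and B = I − A. Then AΩ1Aᵀ + BΩ2Bᵀ = BΩ2 = Ω2 − Ω2(Ω1 + Ω2)†Ω2. -/
open Matrix

lemma mp_unique {n : ℕ} (X Y Z : Matrix (Fin n) (Fin n) ℝ)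
    (hY : IsMoorePenrose X Y) (hZ : IsMoorePenrose X Z) : Y = Z := by
  obtain ⟨hY1, hY2, hY3, hY4⟩ := hY
  obtain ⟨hZ1, hZ2, hZ3, hZ4⟩ := hZ
  have e1 : X * Y = X * Z := by
    calc X * Y = (X * Y)ᵀ := hY3.symm
    _ = Yᵀ * Xᵀ := by rw [Matrix.transpose_mul]
    _ = Yᵀ * (X * Z * X)ᵀ := by rw [hZ1]
    _ = Yᵀ * Xᵀ * (Zᵀ * Xᵀ) := by simp [Matrix.transpose_mul, Matrix.mul_assoc]
    _ = (X * Y)ᵀ * (X * Z)ᵀ := by simp [Matrix.transpose_mul]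
    _ = (X * Y) * (X * Z) := by rw [hY3, hZ3]
    _ = X * Y * X * Z := by rw [Matrix.mul_assoc (X*Y), ← Matrix.mul_assoc]
    _ = X * Z := by rw [hY1]
  have e2 : Y * X = Z * X := by
    calc Y * X = (Y * X)ᵀ := hY4.symm
    _ = Xᵀ * Yᵀ := by rw [Matrix.transpose_mul]
    _ = (X * Z * X)ᵀ * Yᵀ := by rw [hZ1]
    _ = Xᵀ * Zᵀ * (Xᵀ * Yᵀ) := by simp [Matrix.transpose_mul, Matrix.mul_assoc]
    _ = (Z * X)ᵀ * (Y * X)ᵀ := by simp [Matrix.transpose_mul, Matrix.mul_assoc]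
    _ = (Z * X) * (Y * X) := by rw [hZ4, hY4]
    _ = Z * (X * Y * X) := by simp [Matrix.mul_assoc]
    _ = Z * X := by rw [hY1]
  calc Y = Y * X * Y := hY2.symm
  _ = Y * (X * Z) := by rw [Matrix.mul_assoc, e1]
  _ = Z * X * Z := by rw [← Matrix.mul_assoc, e2]
  _ = Z := hZ2

theorem stmt_13 (n : ℕ)
    (O1 O2 : Matrix (Fin n) (Fin n) ℝ)
    (h1 : O1.PosSemidef) (h2 : O2.PosSemidef)
    (D : Matrix (Fin n) (Fin n) ℝ) (hD : IsMoorePenrose (O1 + O2) D)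
    (A B : Matrix (Fin n) (Fin n) ℝ) (hA : A = O2 * D) (hB : B = 1 - A) :
    A * O1 * Aᵀ + B * O2 * Bᵀ = B * O2 ∧ B * O2 = O2 - O2 * D * O2 := by
  set S := O1 + O2 with hS
  have hSsym : Sᵀ = S := by
    have hO1 : O1ᵀ = O1 := by simpa using (congrArg Matrix.transpose h1.isHermitian.eq).symm
    have hO2 : O2ᵀ = O2 := by simpa using (congrArg Matrix.transpose h2.isHermitian.eq).symm
    rw [hS, Matrix.transpose_add, hO1, hO2]
  obtain ⟨hD1, hD2, hD3, hD4⟩ := hD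
  have eq1 : S * Dᵀ = D * S := by
    calc S * Dᵀ = (D * Sᵀ)ᵀ := by
          rw [Matrix.transpose_mul, Matrix.transpose_transpose]
    _ = (D * S)ᵀ := by rw [hSsym]
    _ = D * S := hD4
  have eq2 : Dᵀ * S = S * D := by
    calc Dᵀ * S = (Sᵀ * D)ᵀ := by
          rw [Matrix.transpose_mul, Matrix.transpose_transpose]
    _ = (S * D)ᵀ := by rw [hSsym]
    _ = S * D := hD3
  have hDT : IsMoorePenrose S Dᵀ := by
    refine ⟨?_, ?_, ?_, ?_⟩
    · have t1 : (S * Dᵀ * S)ᵀ = S := by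
        calc (S * Dᵀ * S)ᵀ = Sᵀ * (Dᵀᵀ * Sᵀ) := by
              rw [Matrix.transpose_mul, Matrix.transpose_mul]
        _ = S * (D * S) := by rw [hSsym, Matrix.transpose_transpose]
        _ = S := by rw [← Matrix.mul_assoc, hD1]
      have := congrArg Matrix.transpose t1
      simpa [hSsym] using this
    · have t2 : (Dᵀ * S * Dᵀ)ᵀ = D := by
        calc (Dᵀ * S * Dᵀ)ᵀ = Dᵀᵀ * (Sᵀ * Dᵀᵀ) := by
              rw [Matrix.transpose_mul, Matrix.transpose_mul]
        _ = D * (S * D) := by rw [hSsym, Matrix.transpose_transpose]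
        _ = D := by rw [← Matrix.mul_assoc, hD2]
      have := congrArg Matrix.transpose t2
      simpa using this
    · rw [eq1]; exact hD4
    · rw [eq2]; exact hD3
  have hDsym : Dᵀ = D := mp_unique S Dᵀ D hDT ⟨hD1, hD2, hD3, hD4⟩
  have hO2sym : O2ᵀ = O2 := h2.isHermitian.eq
  have key : O2 * D * S * (D * O2) = O2 * D * O2 := by
    calc O2 * D * S * (D * O2) = O2 * (D * S * D) * O2 := by
          simp [Matrix.mul_assoc]
    _ = O2 * D * O2 := by rw [hD2, Matrix.mul_assoc]
  constructor
  · subst hA hB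
    have hAT : (O2 * D)ᵀ = D * O2 := by rw [Matrix.transpose_mul, hDsym, hO2sym]
    have hBT : (1 - O2 * D)ᵀ = 1 - D * O2 := by
      rw [Matrix.transpose_sub, Matrix.transpose_one, hAT]
    rw [hAT, hBT]
    have expand : O2 * D * O1 * (D * O2) + (1 - O2 * D) * O2 * (1 - D * O2)
        = O2 * D * S * (D * O2) + O2 - O2 * D * O2 - O2 * D * O2 := by
      rw [hS]
      noncomm_ring
    rw [expand, key]
    noncomm_ring
  · subst hA hB
    noncomm_ring
end

section
/- (Optimality of inverse-variance weighting) Let Ω1, Ω2 be n×n symmetric positive definite matrices. Among all matrices A ∈ ℝ^{n×n} (with B = I − A), the covariance AΩ1Aᵀ + BΩ2Bᵀ is minimized in the Loewner order at A* = Ω2(Ω1 + Ω2)⁻¹: for every A, AΩ1Aᵀ + (I−A)Ω2(I−A)ᵀ − (Ω1⁻¹ + Ω2⁻¹)⁻¹ is positive semidefinite, with equality at A = A*. -/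
/-!
Write `S = Ω₁ + Ω₂` and `K = Ω₂ S⁻¹`. Completing the square in `A` gives
`A Ω₁ Aᵀ + (1 - A) Ω₂ (1 - A)ᵀ = (A - K) S (A - K)ᵀ + Ω₂ S⁻¹ Ω₁`, and
`Ω₂ S⁻¹ Ω₁ = (Ω₁⁻¹ + Ω₂⁻¹)⁻¹` because `Ω₁⁻¹ + Ω₂⁻¹ = Ω₁⁻¹ S Ω₂⁻¹`. The first summand is
positive semidefinite since `S` is, and it vanishes at `A = K`.
-/

open Matrix

namespace Matrix

variable {n R : Type*} [Fintype n] [DecidableEq n] [CommRing R]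

theorem inv_inv_add_inv {A B : Matrix n n R} (hA : IsUnit A) (hB : IsUnit B) :
    (A⁻¹ + B⁻¹)⁻¹ = B * (A + B)⁻¹ * A := by
  rw [inv_add_inv (iff_of_true hA hB), mul_inv_rev, mul_inv_rev,
    nonsing_inv_nonsing_inv A ((isUnit_iff_isUnit_det A).1 hA),
    nonsing_inv_nonsing_inv B ((isUnit_iff_isUnit_det B).1 hB), Matrix.mul_assoc]

theorem mul_mul_transpose_add_one_sub_mul_mul_transpose_eq {A Ω₁ Ω₂ : Matrix n n R}
    (h₁ : Ω₁ᵀ = Ω₁) (h₂ : Ω₂ᵀ = Ω₂) (hS : IsUnit (Ω₁ + Ω₂)) :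
    A * Ω₁ * Aᵀ + (1 - A) * Ω₂ * (1 - A)ᵀ
      = (A - Ω₂ * (Ω₁ + Ω₂)⁻¹) * (Ω₁ + Ω₂) * (A - Ω₂ * (Ω₁ + Ω₂)⁻¹)ᵀ
        + Ω₂ * (Ω₁ + Ω₂)⁻¹ * Ω₁ := by
  set S := Ω₁ + Ω₂ with hS_def
  have hS_det := (isUnit_iff_isUnit_det S).1 hS
  have hS_inv_mul := nonsing_inv_mul S hS_det
  have hS_mul_inv_cancel (X : Matrix n n R) : S * (S⁻¹ * X) = X :=
    mul_nonsing_inv_cancel_left S X hS_det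
  have hS_symm : S⁻¹ᵀ = S⁻¹ := by
    rw [transpose_nonsing_inv, hS_def, transpose_add, h₁, h₂]
  have hΩ₁ : Ω₁ = S - Ω₂ := by rw [hS_def, add_sub_cancel_right]
  rw [hΩ₁]
  simp only [transpose_sub, transpose_mul, transpose_one, hS_symm, h₂, Matrix.sub_mul,
    Matrix.mul_sub, Matrix.one_mul, Matrix.mul_one, Matrix.mul_assoc, hS_inv_mul,
    hS_mul_inv_cancel]
  abel

end Matrix

theorem stmt_16 (n : ℕ)
    (O1 O2 : Matrix (Fin n) (Fin n) ℝ)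
    (h1 : O1.PosDef) (h2 : O2.PosDef) :
    (∀ A : Matrix (Fin n) (Fin n) ℝ,
      (A * O1 * Aᵀ + (1 - A) * O2 * (1 - A)ᵀ - (O1⁻¹ + O2⁻¹)⁻¹).PosSemidef) ∧
    (O2 * (O1 + O2)⁻¹) * O1 * (O2 * (O1 + O2)⁻¹)ᵀ
        + (1 - O2 * (O1 + O2)⁻¹) * O2 * (1 - O2 * (O1 + O2)⁻¹)ᵀ
      = (O1⁻¹ + O2⁻¹)⁻¹ := by
  have hS := h1.add h2
  have transpose_eq : ∀ {M : Matrix (Fin n) (Fin n) ℝ}, M.PosDef → Mᵀ = M := fun hM ↦ by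
    simpa only [conjTranspose_eq_transpose_of_trivial] using hM.isHermitian.eq
  have square := fun A ↦ mul_mul_transpose_add_one_sub_mul_mul_transpose_eq (A := A)
    (transpose_eq h1) (transpose_eq h2) hS.isUnit
  rw [inv_inv_add_inv h1.isUnit h2.isUnit]
  refine ⟨fun A ↦ ?_, ?_⟩
  · rw [square, add_sub_cancel_right]
    simpa only [conjTranspose_eq_transpose_of_trivial] using
      hS.posSemidef.mul_mul_conjTranspose_same (A - O2 * (O1 + O2)⁻¹)
  · rw [square, sub_self, Matrix.zero_mul, Matrix.zero_mul, zero_add]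
end

section
/- (Structured block inverse, Lemma 6.3 of the paper) Let F, G00 be m×m, G01 be m×n, G10 be n×m, G11 be n×n real matrices, with F invertible and G = [[G00, G01],[G10, G11]] invertible with inverse H = [[H00, H01],[H10, H11]]. Let P0 = I − (1/d)J and P1 = (1/d)J be the d×d projections, and 𝟙 the d×1 all-ones vector. Then the matrix M = [[F ⊗ P0 + G00 ⊗ P1, G01 ⊗ 𝟙],[G10 ⊗ 𝟙ᵀ, d·G11]] is invertible with inverse [[F⁻¹ ⊗ P0 + H00 ⊗ P1, (1/d)H01 ⊗ 𝟙],[(1/d)H10 ⊗ 𝟙ᵀ, (1/d)H11]]. -/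
open Matrix
open scoped Kronecker

/-- The d×d all-ones matrix. -/
noncomputable def Jmat (d : ℕ) : Matrix (Fin d) (Fin d) ℝ := Matrix.of fun _ _ => 1

/-- P0 = I - (1/d)·J. -/
noncomputable def P0 (d : ℕ) : Matrix (Fin d) (Fin d) ℝ := 1 - ((d : ℝ)⁻¹) • Jmat d

/-- P1 = (1/d)·J. -/
noncomputable def P1 (d : ℕ) : Matrix (Fin d) (Fin d) ℝ := ((d : ℝ)⁻¹) • Jmat d

/-- `X ⊗ 𝟙`, the Kronecker product of `X` with the `d`-dimensional all-ones column vector. -/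
noncomputable def kronOnesCol (d : ℕ) {m n : ℕ} (X : Matrix (Fin m) (Fin n) ℝ) :
    Matrix (Fin m × Fin d) (Fin n) ℝ := Matrix.of fun p j => X p.1 j

/-- `X ⊗ 𝟙ᵀ`, the Kronecker product of `X` with the `d`-dimensional all-ones row vector. -/
noncomputable def kronOnesRow (d : ℕ) {m n : ℕ} (X : Matrix (Fin m) (Fin n) ℝ) :
    Matrix (Fin m) (Fin n × Fin d) ℝ := Matrix.of fun i q => X i q.1

/-
Split `ℝᵐ ⊗ ℝᵈ = (ℝᵐ ⊗ 𝟙^⊥) ⊕ (ℝᵐ ⊗ 𝟙)`. Then `M` is `F ⊗ P0` on the first summand, and on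
`(ℝᵐ ⊗ 𝟙) ⊕ ℝⁿ ≅ ℝᵐ ⊕ ℝⁿ` (via `x ⊗ 𝟙 ↦ x`) it is `S G` with `S = diag(1, d)`, the factor `d`
coming from `𝟙ᵀ 𝟙 = d`. Writing `kronBlock d F G` for the matrix built in this way from `F` and `G`,
we get `kronBlock F G * kronBlock F' G' = kronBlock (F F') (G S G')` and `kronBlock 1 S⁻¹ = 1`.
As `M = kronBlock F G` and `N = kronBlock F⁻¹ (S⁻¹ H S⁻¹)`, both `M N` and `N M` reduce to
`kronBlock 1 S⁻¹`.
-/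

section

variable {d m n p : ℕ}

lemma P1_mul_P1 (hd : 0 < d) : P1 d * P1 d = P1 d := by
  have hJJ : Jmat d * Jmat d = (d : ℝ) • Jmat d := by
    ext i j; simp [Jmat, mul_apply]
  rw [P1, smul_mul_smul_comm, hJJ, smul_smul, mul_assoc, inv_mul_cancel₀ (by positivity), mul_one]

lemma P0_eq_one_sub_P1 : P0 d = 1 - P1 d := rfl

lemma P0_add_P1 : P0 d + P1 d = 1 := by simp [P0, P1]

lemma P0_mul_P0 (hd : 0 < d) : P0 d * P0 d = P0 d := by
  simp only [P0_eq_one_sub_P1, sub_mul, mul_sub, P1_mul_P1 hd, one_mul, mul_one, sub_self, sub_zero]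

lemma P0_mul_P1 (hd : 0 < d) : P0 d * P1 d = 0 := by
  rw [P0_eq_one_sub_P1, sub_mul, one_mul, P1_mul_P1 hd, sub_self]

lemma P1_mul_P0 (hd : 0 < d) : P1 d * P0 d = 0 := by
  rw [P0_eq_one_sub_P1, mul_sub, mul_one, P1_mul_P1 hd, sub_self]

lemma Jmat_eq_smul_P1 (hd : 0 < d) : Jmat d = (d : ℝ) • P1 d := by
  rw [P1, smul_smul, mul_inv_cancel₀ (by positivity), one_smul]

lemma sum_P0_row (hd : 0 < d) (k : Fin d) : ∑ l, P0 d k l = 0 := by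
  simp [P0, Jmat, one_apply, Finset.sum_sub_distrib, hd.ne']

lemma sum_P1_row (hd : 0 < d) (k : Fin d) : ∑ l, P1 d k l = 1 := by
  simp [P1, Jmat, hd.ne']

lemma sum_P0_col (hd : 0 < d) (k : Fin d) : ∑ l, P0 d l k = 0 := by
  simp [P0, Jmat, one_apply, Finset.sum_sub_distrib, hd.ne']

lemma sum_P1_col (hd : 0 < d) (k : Fin d) : ∑ l, P1 d l k = 1 := by
  simp [P1, Jmat, hd.ne']

lemma kronecker_P0_add_kronecker_P1_mul (hd : 0 < d) (A B A' B' : Matrix (Fin m) (Fin m) ℝ) :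
    (A ⊗ₖ P0 d + B ⊗ₖ P1 d) * (A' ⊗ₖ P0 d + B' ⊗ₖ P1 d) =
      (A * A') ⊗ₖ P0 d + (B * B') ⊗ₖ P1 d := by
  simp only [add_mul, mul_add, ← mul_kronecker_mul, P0_mul_P0 hd, P0_mul_P1 hd, P1_mul_P0 hd,
    P1_mul_P1 hd, kronecker_zero, add_zero, zero_add]

lemma kronecker_P0_mul_kronOnesCol (hd : 0 < d) (A : Matrix (Fin m) (Fin n) ℝ)
    (X : Matrix (Fin n) (Fin p) ℝ) : (A ⊗ₖ P0 d) * kronOnesCol d X = 0 := by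
  ext ⟨i, k⟩ j
  simp [mul_apply, kronOnesCol, Fintype.sum_prod_type, mul_assoc, ← Finset.mul_sum,
    ← Finset.sum_mul, sum_P0_row hd]

lemma kronecker_P1_mul_kronOnesCol (hd : 0 < d) (A : Matrix (Fin m) (Fin n) ℝ)
    (X : Matrix (Fin n) (Fin p) ℝ) : (A ⊗ₖ P1 d) * kronOnesCol d X = kronOnesCol d (A * X) := by
  ext ⟨i, k⟩ j
  simp [mul_apply, kronOnesCol, Fintype.sum_prod_type, mul_assoc, ← Finset.mul_sum,
    ← Finset.sum_mul, sum_P1_row hd]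

lemma kronOnesRow_mul_kronecker_P0 (hd : 0 < d) (X : Matrix (Fin m) (Fin n) ℝ)
    (A : Matrix (Fin n) (Fin p) ℝ) : kronOnesRow d X * (A ⊗ₖ P0 d) = 0 := by
  ext i ⟨j, k⟩
  simp [mul_apply, kronOnesRow, Fintype.sum_prod_type, ← Finset.mul_sum, sum_P0_col hd]

lemma kronOnesRow_mul_kronecker_P1 (hd : 0 < d) (X : Matrix (Fin m) (Fin n) ℝ)
    (A : Matrix (Fin n) (Fin p) ℝ) : kronOnesRow d X * (A ⊗ₖ P1 d) = kronOnesRow d (X * A) := by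
  ext i ⟨j, k⟩
  simp [mul_apply, kronOnesRow, Fintype.sum_prod_type, ← Finset.mul_sum, sum_P1_col hd]

lemma kronOnesCol_mul_kronOnesRow (X : Matrix (Fin m) (Fin n) ℝ) (Y : Matrix (Fin n) (Fin p) ℝ) :
    kronOnesCol d X * kronOnesRow d Y = (X * Y) ⊗ₖ Jmat d := by
  ext ⟨i, k⟩ ⟨j, l⟩
  simp [mul_apply, kronOnesCol, kronOnesRow, Jmat]

lemma kronOnesRow_mul_kronOnesCol (X : Matrix (Fin m) (Fin n) ℝ) (Y : Matrix (Fin n) (Fin p) ℝ) :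
    kronOnesRow d X * kronOnesCol d Y = (d : ℝ) • (X * Y) := by
  ext i j
  simp [mul_apply, kronOnesRow, kronOnesCol, Fintype.sum_prod_type, Finset.mul_sum]

lemma mul_kronOnesRow (A : Matrix (Fin m) (Fin n) ℝ) (X : Matrix (Fin n) (Fin p) ℝ) :
    A * kronOnesRow d X = kronOnesRow d (A * X) := by
  ext i ⟨j, k⟩
  simp [mul_apply, kronOnesRow]

lemma kronOnesCol_mul (X : Matrix (Fin m) (Fin n) ℝ) (A : Matrix (Fin n) (Fin p) ℝ) :
    kronOnesCol d X * A = kronOnesCol d (X * A) := by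
  ext ⟨i, k⟩ j
  simp [mul_apply, kronOnesCol]

lemma kronOnesCol_add (X Y : Matrix (Fin m) (Fin n) ℝ) :
    kronOnesCol d (X + Y) = kronOnesCol d X + kronOnesCol d Y := rfl

lemma kronOnesRow_add (X Y : Matrix (Fin m) (Fin n) ℝ) :
    kronOnesRow d (X + Y) = kronOnesRow d X + kronOnesRow d Y := rfl

lemma kronOnesCol_zero : kronOnesCol d (0 : Matrix (Fin m) (Fin n) ℝ) = 0 := rfl

lemma kronOnesRow_zero : kronOnesRow d (0 : Matrix (Fin m) (Fin n) ℝ) = 0 := rfl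

lemma kronOnesCol_smul (c : ℝ) (X : Matrix (Fin m) (Fin n) ℝ) :
    kronOnesCol d (c • X) = c • kronOnesCol d X := rfl

lemma kronOnesRow_smul (c : ℝ) (X : Matrix (Fin m) (Fin n) ℝ) :
    kronOnesRow d (c • X) = c • kronOnesRow d X := rfl

end

noncomputable def kronBlock (d : ℕ) {m n : ℕ} (F : Matrix (Fin m) (Fin m) ℝ)
    (G : Matrix (Fin m ⊕ Fin n) (Fin m ⊕ Fin n) ℝ) :
    Matrix ((Fin m × Fin d) ⊕ Fin n) ((Fin m × Fin d) ⊕ Fin n) ℝ :=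
  fromBlocks (F ⊗ₖ P0 d + G.toBlocks₁₁ ⊗ₖ P1 d) (kronOnesCol d G.toBlocks₁₂)
    (kronOnesRow d G.toBlocks₂₁) ((d : ℝ) • G.toBlocks₂₂)

def blockScale (m : ℕ) {n : ℕ} (c : ℝ) : Matrix (Fin m ⊕ Fin n) (Fin m ⊕ Fin n) ℝ :=
  fromBlocks 1 0 0 (c • 1)

section

variable {d m n : ℕ}

lemma blockScale_mul_fromBlocks_mul_blockScale (c : ℝ) (A : Matrix (Fin m) (Fin m) ℝ)
    (B : Matrix (Fin m) (Fin n) ℝ) (C : Matrix (Fin n) (Fin m) ℝ) (D : Matrix (Fin n) (Fin n) ℝ) :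
    blockScale m c * fromBlocks A B C D * blockScale m c =
      fromBlocks A (c • B) (c • C) ((c * c) • D) := by
  simp [blockScale, fromBlocks_multiply, smul_smul]

lemma blockScale_mul_blockScale (c c' : ℝ) :
    blockScale m (n := n) c * blockScale m c' = blockScale m (c * c') := by
  simp [blockScale, fromBlocks_multiply, smul_smul, mul_comm]

lemma blockScale_one : blockScale m (n := n) 1 = 1 := by
  simp [blockScale, fromBlocks_one]

lemma kronBlock_mul (hd : 0 < d) (F F' : Matrix (Fin m) (Fin m) ℝ)
    (G G' : Matrix (Fin m ⊕ Fin n) (Fin m ⊕ Fin n) ℝ) :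
    kronBlock d F G * kronBlock d F' G' = kronBlock d (F * F') (G * blockScale m d * G') := by
  obtain ⟨A, B, C, D, rfl⟩ : ∃ A B C D, G = fromBlocks A B C D :=
    ⟨_, _, _, _, (fromBlocks_toBlocks G).symm⟩
  obtain ⟨A', B', C', D', rfl⟩ : ∃ A B C D, G' = fromBlocks A B C D :=
    ⟨_, _, _, _, (fromBlocks_toBlocks G').symm⟩
  simp only [kronBlock, blockScale, fromBlocks_multiply, toBlocks_fromBlocks₁₁,
    toBlocks_fromBlocks₁₂, toBlocks_fromBlocks₂₁, toBlocks_fromBlocks₂₂, fromBlocks_inj,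
    Matrix.mul_one, Matrix.mul_zero, add_zero, zero_add, Matrix.mul_smul, Matrix.smul_mul]
  refine ⟨?_, ?_, ?_, ?_⟩
  · rw [kronecker_P0_add_kronecker_P1_mul hd, kronOnesCol_mul_kronOnesRow, Jmat_eq_smul_P1 hd,
      kronecker_smul, add_kronecker, smul_kronecker, add_assoc]
  · rw [Matrix.add_mul, kronecker_P0_mul_kronOnesCol hd, kronecker_P1_mul_kronOnesCol hd,
      kronOnesCol_mul, zero_add, kronOnesCol_add, kronOnesCol_smul]
  · rw [Matrix.mul_add, kronOnesRow_mul_kronecker_P0 hd, kronOnesRow_mul_kronecker_P1 hd,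
      mul_kronOnesRow, zero_add, kronOnesRow_add, kronOnesRow_smul]
  · rw [kronOnesRow_mul_kronOnesCol, smul_smul, smul_add, smul_smul]

lemma kronBlock_one_blockScale_inv (hd : 0 < d) :
    kronBlock d (1 : Matrix (Fin m) (Fin m) ℝ) (blockScale m (n := n) (d : ℝ)⁻¹) = 1 := by
  have hd' : (d : ℝ) ≠ 0 := by positivity
  simp only [kronBlock, blockScale, toBlocks_fromBlocks₁₁, toBlocks_fromBlocks₁₂,
    toBlocks_fromBlocks₂₁, toBlocks_fromBlocks₂₂, ← kronecker_add, P0_add_P1, one_kronecker_one,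
    smul_smul, mul_inv_cancel₀ hd', one_smul, kronOnesCol_zero, kronOnesRow_zero, fromBlocks_one]

end

theorem stmt_17 (d m n : ℕ) (hd : 0 < d)
    (F G00 : Matrix (Fin m) (Fin m) ℝ)
    (G01 : Matrix (Fin m) (Fin n) ℝ) (G10 : Matrix (Fin n) (Fin m) ℝ)
    (G11 : Matrix (Fin n) (Fin n) ℝ)
    (H00 : Matrix (Fin m) (Fin m) ℝ)
    (H01 : Matrix (Fin m) (Fin n) ℝ) (H10 : Matrix (Fin n) (Fin m) ℝ)
    (H11 : Matrix (Fin n) (Fin n) ℝ)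
    (hF : IsUnit F)
    (hGH : fromBlocks G00 G01 G10 G11 * fromBlocks H00 H01 H10 H11 = 1)
    (hHG : fromBlocks H00 H01 H10 H11 * fromBlocks G00 G01 G10 G11 = 1)
    (M N : Matrix ((Fin m × Fin d) ⊕ Fin n) ((Fin m × Fin d) ⊕ Fin n) ℝ)
    (hM : M = fromBlocks (F ⊗ₖ P0 d + G00 ⊗ₖ P1 d) (kronOnesCol d G01)
      (kronOnesRow d G10) ((d : ℝ) • G11))
    (hN : N = fromBlocks (F⁻¹ ⊗ₖ P0 d + H00 ⊗ₖ P1 d) (kronOnesCol d ((d : ℝ)⁻¹ • H01))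
      (kronOnesRow d ((d : ℝ)⁻¹ • H10)) ((d : ℝ)⁻¹ • H11)) :
    M * N = 1 ∧ N * M = 1 := by
  have hd' : (d : ℝ) ≠ 0 := by positivity
  set G := fromBlocks G00 G01 G10 G11
  set H := fromBlocks H00 H01 H10 H11
  set S := blockScale m (n := n) (d : ℝ)
  set S' := blockScale m (n := n) (d : ℝ)⁻¹
  have hSS' : S * S' = 1 := by
    rw [blockScale_mul_blockScale, mul_inv_cancel₀ hd', blockScale_one]
  have hS'S : S' * S = 1 := by
    rw [blockScale_mul_blockScale, inv_mul_cancel₀ hd', blockScale_one]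
  have hM' : M = kronBlock d F G := by
    simp [hM, kronBlock, G]
  have hN' : N = kronBlock d F⁻¹ (S' * H * S') := by
    rw [hN, blockScale_mul_fromBlocks_mul_blockScale, kronBlock]
    simp [smul_smul, hd']
  have hFdet := (isUnit_iff_isUnit_det F).mp hF
  rw [hM', hN', kronBlock_mul hd, kronBlock_mul hd, mul_nonsing_inv F hFdet,
    nonsing_inv_mul F hFdet]
  constructor
  · calc kronBlock d 1 (G * S * (S' * H * S')) = kronBlock d 1 (G * (S * S') * H * S') := by
          simp only [Matrix.mul_assoc]
      _ = 1 := by rw [hSS', Matrix.mul_one, hGH, Matrix.one_mul, kronBlock_one_blockScale_inv hd]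
  · calc kronBlock d 1 (S' * H * S' * S * G) = kronBlock d 1 (S' * H * (S' * S) * G) := by
          simp only [Matrix.mul_assoc]
      _ = 1 := by
          rw [hS'S, Matrix.mul_one, Matrix.mul_assoc, hHG, Matrix.mul_one,
            kronBlock_one_blockScale_inv hd]
end
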